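/- arXiv:1607.00278 — 4 statements merged into one kernel-verified Lean document; each statement's English description precedes it below -/
import Mathlib

section
/- The graph B_11 has an inside-obstacle representation. -/
noncomputable section

/-- The plane ℝ². -/
abbrev Plane : Type := EuclideanSpace ℝ (Fin 2)

/-- A point set is in general position if no three of its points are collinear. -/
def InGenPos (P : Set Plane) : Prop :=
  ∀ p ∈ P, ∀ q ∈ P, ∀ r ∈ P, p ≠ q → p ≠ r → q ≠ r →
    ¬ Collinear ℝ ({p, q, r} : Set Plane)

/-- The union of the closed segments corresponding to the edges of `G`
in the straight-line drawing given by `f`. -/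
def edgeUnion {V : Type} (G : SimpleGraph V) (f : V → Plane) : Set Plane :=
  ⋃ (u : V) (v : V) (_ : G.Adj u v), segment ℝ (f u) (f v)

/-- The unbounded connected component of the complement of the drawing. -/
def outsideRegion {V : Type} (G : SimpleGraph V) (f : V → Plane) : Set Plane :=
  {p | p ∈ (edgeUnion G f)ᶜ ∧
       ¬ Bornology.IsBounded (connectedComponentIn (edgeUnion G f)ᶜ p)}

/-- `(f, C)` is a single-obstacle representation of `G`. -/
def IsObstacleRep {V : Type} (G : SimpleGraph V) (f : V → Plane) (C : Set Plane) : Prop :=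
  Function.Injective f ∧ InGenPos (Set.range f) ∧
  IsOpen C ∧ IsConnected C ∧ Disjoint C (Set.range f) ∧
  ∀ u v : V, u ≠ v → (G.Adj u v ↔ Disjoint (segment ℝ (f u) (f v)) C)

/-- An outside-obstacle representation: the obstacle lies in the unbounded component. -/
def IsOutsideObstacleRep {V : Type} (G : SimpleGraph V) (f : V → Plane) (C : Set Plane) : Prop :=
  IsObstacleRep G f C ∧ C ⊆ outsideRegion G f

/-- An inside-obstacle representation: the obstacle avoids the unbounded component. -/
def IsInsideObstacleRep {V : Type} (G : SimpleGraph V) (f : V → Plane) (C : Set Plane) : Prop :=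
  IsObstacleRep G f C ∧ Disjoint C (outsideRegion G f)

/-- An exposed outside-obstacle representation: every vertex lies on the boundary of
the unbounded component. -/
def IsExposedOutsideObstacleRep {V : Type} (G : SimpleGraph V) (f : V → Plane)
    (C : Set Plane) : Prop :=
  IsOutsideObstacleRep G f C ∧ ∀ v : V, f v ∈ closure (outsideRegion G f)

/-- `p` is an extreme point ("on the convex hull") of the point set `P`. -/
def IsExtremePt (p : Plane) (P : Set Plane) : Prop :=
  p ∉ convexHull ℝ (P \ {p})

/-- `S` has at least `n` connected components. -/
def AtLeastNComponents (S : Set Plane) (n : ℕ) : Prop :=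
  ∃ p : Fin n → Plane, (∀ i, p i ∈ S) ∧
    ∀ i j : Fin n, i ≠ j →
      connectedComponentIn S (p i) ≠ connectedComponentIn S (p j)

/-- `S` has exactly `n` connected components. -/
def ExactlyNComponents (S : Set Plane) (n : ℕ) : Prop :=
  ∃ p : Fin n → Plane, (∀ i, p i ∈ S) ∧
    (∀ i j : Fin n, i ≠ j →
      connectedComponentIn S (p i) ≠ connectedComponentIn S (p j)) ∧
    ∀ q ∈ S, ∃ i : Fin n, connectedComponentIn S q = connectedComponentIn S (p i)

/-- The convex hulls of `A` and `B` are at least `t`-crossing. -/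
def AtLeastCrossing (A B : Set Plane) (t : ℕ) : Prop :=
  ((convexHull ℝ A) ∩ (convexHull ℝ B)).Nonempty ∧
    AtLeastNComponents ((convexHull ℝ A) \ (convexHull ℝ B)) (t + 1)

/-- The convex hulls of `A` and `B` are exactly `t`-crossing. -/
def ExactlyCrossing (A B : Set Plane) (t : ℕ) : Prop :=
  ((convexHull ℝ A) ∩ (convexHull ℝ B)).Nonempty ∧
    ExactlyNComponents ((convexHull ℝ A) \ (convexHull ℝ B)) (t + 1)


/-- Non-edge pairs of `B₁₁` (one orientation): the matching `zᵢzᵢ'` and the pairs `w zᵢ'`. -/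
def b11NonEdge (i j : Fin 11) : Prop :=
  (i.val < 5 ∧ j.val = i.val + 5) ∨ (i.val = 10 ∧ 5 ≤ j.val ∧ j.val ≤ 9)

/-- The graph `B₁₁`: vertices `0,…,4` are `z₁,…,z₅`, vertices `5,…,9` are `z₁',…,z₅'`,
vertex `10` is `w`.  The first ten vertices induce `K₁₀` minus the perfect matching
`{zᵢzᵢ' : i = 1,…,5}`, and `w` is adjacent exactly to `z₁,…,z₅`. -/
def B11 : SimpleGraph (Fin 11) where
  Adj i j := i ≠ j ∧ ¬ (b11NonEdge i j ∨ b11NonEdge j i)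
  symm := by
    constructor
    intro i j h
    exact ⟨h.1.symm, fun hc => h.2 hc.symm⟩
  loopless := by
    constructor
    intro i h
    exact h.1 rfl

/-!
Place `zᵢ` on a flat arc, `zᵢ' = -zᵢ`, and `w` just below the origin. The obstacle is a
thin neighbourhood of a star whose hub lies inside the convex 10-gon `z₁ ⋯ z₅ z₁' ⋯ z₅'`
and whose spokes end at the origin, which every matching segment `zᵢzᵢ'` passes through,
and at points of the segments `wzᵢ'` close to `w`. Every edge is kept off the obstacle by a
line separating it from the star, which is checked in integer arithmetic. The sides of the
10-gon are edges, so the component of the complement of the drawing that contains the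
obstacle stays inside the 10-gon.
-/

open Metric Set

def spokes {E ι : Type*} [AddCommGroup E] [Module ℝ E] (h : E) (e : ι → E) : Set E :=
  ⋃ i, segment ℝ h (e i)

section Spokes

variable {E ι : Type*} [AddCommGroup E] [Module ℝ E] {h : E} {e : ι → E}

lemma starConvex_spokes : StarConvex ℝ h (spokes h e) :=
  starConvex_iUnion fun i => (convex_segment h (e i)).starConvex (left_mem_segment ℝ h (e i))

lemma mem_spokes (i : ι) : e i ∈ spokes h e :=
  mem_iUnion.2 ⟨i, right_mem_segment ℝ h (e i)⟩

lemma hub_mem_spokes [Nonempty ι] : h ∈ spokes h e :=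
  mem_iUnion.2 ⟨Classical.arbitrary ι, left_mem_segment ℝ h _⟩

lemma spokes_subset {s : Set E} (hs : Convex ℝ s) (hh : h ∈ s) (he : ∀ i, e i ∈ s) :
    spokes h e ⊆ s :=
  iUnion_subset fun i => hs.segment_subset hh (he i)

end Spokes

lemma StarConvex.thickening {E : Type*} [SeminormedAddCommGroup E] [NormedSpace ℝ E]
    {s : Set E} {x : E} (hs : StarConvex ℝ x s) {ε : ℝ} (hε : 0 < ε) :
    StarConvex ℝ x (thickening ε s) := by
  rw [← add_ball_zero]
  simpa using hs.add ((convex_ball (0 : E) ε).starConvex (mem_ball_self hε))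

lemma mem_segment_of_smul_eq {E : Type*} [AddCommGroup E] [Module ℝ E] {a b x : E} {r : ℝ}
    (hr : 1 ≤ r) (h : r • x = (r - 1) • a + b) : x ∈ segment ℝ a b := by
  have hr0 : r ≠ 0 := by positivity
  refine ⟨(r - 1) / r, 1 / r, div_nonneg (by linarith) (by linarith), by positivity,
    by field_simp; ring, smul_right_injective E hr0 ?_⟩
  simp only [smul_add, smul_smul, mul_div_cancel₀ _ hr0, one_smul, h]

lemma connectedComponentIn_compl_subset {X : Type*} [TopologicalSpace X] {F S : Set X} {x : X}
    (hS : IsOpen S) (hF : frontier S ⊆ F) (hx : x ∈ S) : connectedComponentIn Fᶜ x ⊆ S := by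
  by_cases hxF : x ∈ F
  · simp [connectedComponentIn_eq_empty (fun h : x ∈ Fᶜ => h hxF)]
  refine isPreconnected_connectedComponentIn.subset_left_of_subset_union hS
    isClosed_closure.isOpen_compl (disjoint_compl_right_iff_subset.2 subset_closure)
    (fun y hy => ?_) ⟨x, mem_connectedComponentIn hxF, hx⟩
  by_contra hy'
  simp only [mem_union, mem_compl_iff, not_or, not_not] at hy'
  exact connectedComponentIn_subset _ _ hy
    (hF (by rw [hS.frontier_eq]; exact ⟨hy'.2, hy'.1⟩))

lemma disjoint_outsideRegion_of_subset {V : Type} {G : SimpleGraph V} {f : V → Plane}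
    {S C : Set Plane} (hS : IsOpen S) (hSb : Bornology.IsBounded S)
    (hF : frontier S ⊆ edgeUnion G f) (hC : C ⊆ S) : Disjoint C (outsideRegion G f) :=
  disjoint_left.2 fun _ hxC hx =>
    hx.2 (hSb.subset (connectedComponentIn_compl_subset hS hF (hC hxC)))

lemma segment_subset_edgeUnion {V : Type} {G : SimpleGraph V} (f : V → Plane) {u v : V}
    (h : G.Adj u v) : segment ℝ (f u) (f v) ⊆ edgeUnion G f :=
  subset_iUnion₂_of_subset u v (subset_iUnion_of_subset h subset_rfl)

namespace Plane

/-- Positive when `v` points to the left of `u`. -/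
def cross : Plane →ₗ[ℝ] Plane →ₗ[ℝ] ℝ :=
  LinearMap.mk₂ ℝ (fun u v => u 0 * v 1 - u 1 * v 0)
    (fun _ _ _ => by simp only [PiLp.add_apply]; ring)
    (fun _ _ _ => by simp only [PiLp.smul_apply, smul_eq_mul]; ring)
    (fun _ _ _ => by simp only [PiLp.add_apply]; ring)
    (fun _ _ _ => by simp only [PiLp.smul_apply, smul_eq_mul]; ring)

lemma cross_apply (u v : Plane) : cross u v = u 0 * v 1 - u 1 * v 0 := rfl

@[simp]
lemma cross_self (u : Plane) : cross u u = 0 := by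
  rw [cross_apply]; ring

lemma cross_swap (u v : Plane) : cross v u = -cross u v := by
  rw [cross_apply, cross_apply]; ring

lemma norm_sq_eq (x : Plane) : ‖x‖ ^ 2 = x 0 ^ 2 + x 1 ^ 2 := by
  simp [EuclideanSpace.norm_sq_eq, Fin.sum_univ_two]

lemma abs_cross_le (u v : Plane) : |cross u v| ≤ ‖u‖ * ‖v‖ := by
  refine abs_le_of_sq_le_sq ?_ (by positivity)
  rw [mul_pow, norm_sq_eq, norm_sq_eq, cross_apply]
  nlinarith [sq_nonneg (u 0 * v 0 + u 1 * v 1)]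

lemma cross_smul_eq (u v x : Plane) : cross u v • x = cross u x • v - cross v x • u := by
  ext i
  fin_cases i <;> simp [cross_apply] <;> ring

lemma norm_mul_abs_cross_le (u v x : Plane) :
    ‖x‖ * |cross u v| ≤ |cross u x| * ‖v‖ + |cross v x| * ‖u‖ :=
  calc ‖x‖ * |cross u v| = ‖cross u x • v - cross v x • u‖ := by
        rw [← cross_smul_eq, norm_smul, Real.norm_eq_abs, mul_comm]
    _ ≤ ‖cross u x • v‖ + ‖cross v x • u‖ := norm_sub_le _ _
    _ = |cross u x| * ‖v‖ + |cross v x| * ‖u‖ := by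
        rw [norm_smul, norm_smul, Real.norm_eq_abs, Real.norm_eq_abs]

lemma not_collinear_of_cross_ne_zero {p q r : Plane} (h : cross (q - p) (r - p) ≠ 0) :
    ¬ Collinear ℝ ({p, q, r} : Set Plane) := by
  rw [collinear_iff_of_mem (mem_insert p _)]
  rintro ⟨v, hv⟩
  obtain ⟨a, rfl⟩ := hv q (by simp)
  obtain ⟨b, rfl⟩ := hv r (by simp)
  simp at h

lemma mem_segment_of_cross_eq_zero {a b c d x : Plane}
    (habc : 0 < cross (b - a) (c - b)) (hbcd : 0 < cross (c - b) (d - c))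
    (ha : 0 ≤ cross (b - a) (x - a)) (hb : cross (c - b) (x - b) = 0)
    (hc : 0 ≤ cross (d - c) (x - c)) : x ∈ segment ℝ b c := by
  set t := cross (b - a) (x - b) / cross (b - a) (c - b)
  have hx : x - b = t • (c - b) := by
    refine smul_right_injective Plane habc.ne' ?_
    have key := cross_smul_eq (c - b) (b - a) (x - b)
    rw [hb, zero_smul, zero_sub, cross_swap (b - a), neg_smul, neg_inj] at key
    simp only [t, smul_smul, mul_div_cancel₀ _ habc.ne']
    exact key
  have ht0 : 0 ≤ t := by
    refine div_nonneg ?_ habc.le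
    rwa [show x - b = (x - a) - (b - a) by abel, map_sub, cross_self, sub_zero]
  have ht1 : t ≤ 1 := by
    rw [show x - c = (t - 1) • (c - b) by rw [sub_smul, one_smul, ← hx]; abel, map_smul,
      smul_eq_mul, cross_swap] at hc
    nlinarith
  rw [segment_eq_image']
  exact ⟨t, ⟨ht0, ht1⟩, show b + t • (c - b) = x by rw [← hx]; abel⟩

section Polygon

variable {n : ℕ} [NeZero n] (p : Fin n → Plane)

/-- For a convex polygon with vertices in counterclockwise order, its interior. -/
def openPolygon : Set Plane := ⋂ i, {x | 0 < cross (p (i + 1) - p i) (x - p i)}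

lemma continuous_cross_sub (d q : Plane) : Continuous fun x => cross d (x - q) :=
  (LinearMap.continuous_of_finiteDimensional (cross d)).comp (continuous_sub_right q)

lemma isOpen_openPolygon : IsOpen (openPolygon p) :=
  isOpen_iInter_of_finite fun _ => isOpen_lt continuous_const (continuous_cross_sub _ _)

lemma frontier_openPolygon_subset
    (hp : ∀ i, 0 < cross (p (i + 1) - p i) (p (i + 1 + 1) - p (i + 1))) :
    frontier (openPolygon p) ⊆ ⋃ i, segment ℝ (p i) (p (i + 1)) := by
  intro x hx
  rw [(isOpen_openPolygon p).frontier_eq] at hx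
  have hle : x ∈ ⋂ i, {x | 0 ≤ cross (p (i + 1) - p i) (x - p i)} :=
    closure_minimal (iInter_mono fun _ _ hy => le_of_lt hy)
      (isClosed_iInter fun _ => isClosed_le continuous_const (continuous_cross_sub _ _)) hx.1
  rw [mem_iInter] at hle
  obtain ⟨i, hi⟩ : ∃ i, ¬ 0 < cross (p (i + 1) - p i) (x - p i) := by
    simpa [openPolygon] using hx.2
  have hprev := hp (i - 1)
  have hle_prev := hle (i - 1)
  simp only [sub_add_cancel] at hprev hle_prev
  exact mem_iUnion.2 ⟨i, mem_segment_of_cross_eq_zero hprev (hp i) hle_prev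
    (le_antisymm (not_lt.1 hi) (hle i)) (hle (i + 1))⟩

/-- The `cross` distances of a point to the sides sum to a constant, since the sides sum to 0. -/
lemma cross_side_le_of_mem_openPolygon {x : Plane} (hx : x ∈ openPolygon p) (j : Fin n) :
    cross (p (j + 1) - p j) (x - p j) ≤ ∑ i, cross (p (i + 1) - p i) (-p i) := by
  rw [openPolygon, mem_iInter] at hx
  have hsum : ∑ i, (p (i + 1) - p i) = 0 := by
    rw [Finset.sum_sub_distrib, sub_eq_zero]
    exact Fintype.sum_equiv (Equiv.addRight 1) _ _ fun _ => rfl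
  calc cross (p (j + 1) - p j) (x - p j) ≤ ∑ i, cross (p (i + 1) - p i) (x - p i) :=
        Finset.single_le_sum (f := fun i => cross (p (i + 1) - p i) (x - p i))
          (fun i _ => (hx i).le) (Finset.mem_univ j)
    _ = cross (∑ i, (p (i + 1) - p i)) x + ∑ i, cross (p (i + 1) - p i) (-p i) := by
        simp only [sub_eq_add_neg x, map_add, Finset.sum_add_distrib, LinearMap.map_sum₂]
    _ = ∑ i, cross (p (i + 1) - p i) (-p i) := by
        rw [hsum, map_zero, LinearMap.zero_apply, zero_add]

lemma isBounded_openPolygon (j : Fin n)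
    (hj : 0 < cross (p (j + 1) - p j) (p (j + 1 + 1) - p (j + 1))) :
    Bornology.IsBounded (openPolygon p) := by
  set A := ∑ i, cross (p (i + 1) - p i) (-p i)
  have hside : ∀ i, ∀ x ∈ openPolygon p,
      |cross (p (i + 1) - p i) x| ≤ A + |cross (p (i + 1) - p i) (p i)| := by
    intro i x hx
    have h0 : 0 < cross (p (i + 1) - p i) (x - p i) := mem_iInter.1 hx i
    have h1 := cross_side_le_of_mem_openPolygon p hx i
    rw [map_sub] at h0 h1
    rw [abs_le]
    constructor <;> linarith [neg_abs_le (cross (p (i + 1) - p i) (p i)),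
      le_abs_self (cross (p (i + 1) - p i) (p i))]
  set u := p (j + 1) - p j
  set v := p (j + 1 + 1) - p (j + 1)
  refine isBounded_iff_forall_norm_le.2
    ⟨((A + |cross u (p j)|) * ‖v‖ + (A + |cross v (p (j + 1))|) * ‖u‖) / cross u v,
      fun x hx => (le_div_iff₀ hj).2 ?_⟩
  have hu := hside j x hx
  have hv := hside (j + 1) x hx
  calc ‖x‖ * cross u v = ‖x‖ * |cross u v| := by rw [abs_of_pos hj]
    _ ≤ |cross u x| * ‖v‖ + |cross v x| * ‖u‖ := norm_mul_abs_cross_le u v x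
    _ ≤ _ := by gcongr

end Polygon

lemma lt_cross_of_mem_thickening {K : Set Plane} {d y : Plane} {a ε : ℝ}
    (hK : ∀ k ∈ K, a + ε * ‖d‖ < cross d k) (hy : y ∈ thickening ε K) : a < cross d y := by
  obtain ⟨k, hk, hyk⟩ := mem_thickening_iff.1 hy
  have h1 : cross d k - cross d y ≤ ‖d‖ * dist k y := by
    rw [← map_sub, dist_eq_norm]
    exact (le_abs_self _).trans (abs_cross_le _ _)
  have h2 : ‖d‖ * dist k y ≤ ε * ‖d‖ := by
    rw [mul_comm, dist_comm]
    gcongr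
  linarith [hK k hk]

lemma disjoint_segment_thickening {K : Set Plane} {p q d : Plane} {a ε : ℝ}
    (hp : cross d p ≤ a) (hq : cross d q ≤ a) (hK : ∀ k ∈ K, a + ε * ‖d‖ < cross d k) :
    Disjoint (segment ℝ p q) (thickening ε K) :=
  disjoint_left.2 fun _ hy hyK => (lt_cross_of_mem_thickening hK hyK).not_ge
    ((convex_halfSpace_le (cross d).isLinear a).segment_subset hp hq hy)

def ofInt (a : ℤ × ℤ) : Plane := !₂[(a.1 : ℝ), a.2]

@[simp] lemma ofInt_apply_zero (a : ℤ × ℤ) : ofInt a 0 = a.1 := rfl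
@[simp] lemma ofInt_apply_one (a : ℤ × ℤ) : ofInt a 1 = a.2 := rfl

lemma ofInt_injective : Function.Injective ofInt := fun a b h => by
  have h0 := congrArg (· 0) h
  have h1 := congrArg (· 1) h
  simp only [ofInt_apply_zero, ofInt_apply_one, Int.cast_inj] at h0 h1
  exact Prod.ext h0 h1

lemma ofInt_add (a b : ℤ × ℤ) : ofInt (a + b) = ofInt a + ofInt b := by
  ext i; fin_cases i <;> simp

lemma ofInt_sub (a b : ℤ × ℤ) : ofInt (a - b) = ofInt a - ofInt b := by
  ext i; fin_cases i <;> simp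

lemma ofInt_smul (r : ℤ) (a : ℤ × ℤ) : ofInt (r • a) = (r : ℝ) • ofInt a := by
  ext i; fin_cases i <;> simp

def crossInt (a b : ℤ × ℤ) : ℤ := a.1 * b.2 - a.2 * b.1

lemma cross_ofInt (a b : ℤ × ℤ) : cross (ofInt a) (ofInt b) = crossInt a b := by
  simp [cross_apply, crossInt]

/-- `c - a > ε ‖d‖`, squared to stay in `ℤ`. -/
def ExceedsBy (ε : ℕ) (d : ℤ × ℤ) (a c : ℤ) : Prop :=
  a < c ∧ ε ^ 2 * (d.1 ^ 2 + d.2 ^ 2) < (c - a) ^ 2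

instance (ε : ℕ) (d : ℤ × ℤ) (a c : ℤ) : Decidable (ExceedsBy ε d a c) :=
  inferInstanceAs (Decidable (_ ∧ _))

lemma ExceedsBy.lt {ε : ℕ} {d : ℤ × ℤ} {a c : ℤ} (h : ExceedsBy ε d a c) :
    (a : ℝ) + ε * ‖ofInt d‖ < c := by
  obtain ⟨hac, hsq⟩ := h
  have hnorm : ‖ofInt d‖ ^ 2 = ((d.1 ^ 2 + d.2 ^ 2 : ℤ) : ℝ) := by
    rw [norm_sq_eq]; push_cast; rfl
  have hsq' : ((ε : ℝ) * ‖ofInt d‖) ^ 2 < ((c : ℝ) - a) ^ 2 := by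
    rw [mul_pow, hnorm]; exact_mod_cast hsq
  have hac' : (a : ℝ) < c := by exact_mod_cast hac
  linarith [(pow_lt_pow_iff_left₀ (by positivity) (by linarith) two_ne_zero).1 hsq']

end Plane

instance : DecidableRel b11NonEdge := fun i j =>
  inferInstanceAs (Decidable ((i.val < 5 ∧ j.val = i.val + 5) ∨ _))

instance : DecidableRel B11.Adj := fun i j =>
  inferInstanceAs (Decidable (i ≠ j ∧ ¬ (b11NonEdge i j ∨ b11NonEdge j i)))

namespace B11Rep

open Plane

/-- `z₁, …, z₅` on an arc in the upper half-plane, `zᵢ' = -zᵢ`, and `w` just below the origin. -/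
def vertexInt : Fin 11 → ℤ × ℤ :=
  ![(-8700, 49250), (-15450, 47550), (-21900, 44950), (-27950, 41450), (-33450, 37150),
    (8700, -49250), (15450, -47550), (21900, -44950), (27950, -41450), (33450, -37150),
    (0, -1000)]

def hubInt : ℤ × ℤ := (1000, -1000)

/-- The origin, which is the midpoint of every `zᵢzᵢ'`, and the points `1/50` of the way from
`w` to `zᵢ'`. -/
def endInt : Fin 6 → ℤ × ℤ :=
  ![(0, 0), (174, -1965), (309, -1931), (438, -1879), (559, -1809), (669, -1723)]

def vertex (i : Fin 11) : Plane := ofInt (vertexInt i)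

def obstacle : Set Plane := thickening 25 (spokes (ofInt hubInt) (ofInt ∘ endInt))

/-- The spokes lie farther than `25` beyond the line `crossInt d · = a`, on the side where
`crossInt d` is large. -/
def SpokesAbove (d : ℤ × ℤ) (a : ℤ) : Prop :=
  ExceedsBy 25 d a (crossInt d hubInt) ∧ ∀ m, ExceedsBy 25 d a (crossInt d (endInt m))

instance (d : ℤ × ℤ) (a : ℤ) : Decidable (SpokesAbove d a) :=
  inferInstanceAs (Decidable (_ ∧ _))

/-- The edges at `w` are kept off the obstacle by one common line, of direction `(-58, 655)`;
every other edge by its own line. -/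
lemma spokesAbove_of_adj : ∀ u v, B11.Adj u v →
    ∃ d ∈ [vertexInt v - vertexInt u, vertexInt u - vertexInt v, (-58, 655), (58, -655)],
      SpokesAbove d (max (crossInt d (vertexInt u)) (crossInt d (vertexInt v))) := by
  decide

lemma exists_smul_endInt_eq_of_nonEdge : ∀ u v, b11NonEdge u v →
    ∃ m, ∃ r ∈ ([2, 50] : List ℤ), r • endInt m = (r - 1) • vertexInt u + vertexInt v := by
  decide

lemma lt_cross_of_spokesAbove {d : ℤ × ℤ} {a : ℤ} (h : SpokesAbove d a) :
    ∀ k ∈ spokes (ofInt hubInt) (ofInt ∘ endInt),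
      (a : ℝ) + 25 * ‖ofInt d‖ < cross (ofInt d) k :=
  spokes_subset (convex_halfSpace_gt (cross (ofInt d)).isLinear _)
    (show _ < cross (ofInt d) (ofInt hubInt) by simpa [cross_ofInt] using h.1.lt)
    fun m => show _ < cross (ofInt d) (ofInt (endInt m)) by simpa [cross_ofInt] using (h.2 m).lt

lemma disjoint_segment_obstacle {u v : Fin 11} (h : B11.Adj u v) :
    Disjoint (segment ℝ (vertex u) (vertex v)) obstacle := by
  obtain ⟨d, -, hd⟩ := spokesAbove_of_adj u v h
  refine disjoint_segment_thickening ?_ ?_ (lt_cross_of_spokesAbove hd)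
  · rw [vertex, cross_ofInt]; exact_mod_cast le_max_left _ _
  · rw [vertex, cross_ofInt]; exact_mod_cast le_max_right _ _

lemma not_disjoint_segment_obstacle {u v : Fin 11} (h : b11NonEdge u v) :
    ¬ Disjoint (segment ℝ (vertex u) (vertex v)) obstacle := by
  obtain ⟨m, r, hr, hm⟩ := exists_smul_endInt_eq_of_nonEdge u v h
  have hr1 : (1 : ℝ) ≤ r := by
    have : 1 ≤ r := by simp only [List.mem_cons, List.not_mem_nil, or_false] at hr; omega
    exact_mod_cast this
  have hmem : ofInt (endInt m) ∈ segment ℝ (vertex u) (vertex v) := by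
    refine mem_segment_of_smul_eq hr1 ?_
    have := congrArg ofInt hm
    rwa [ofInt_smul, ofInt_add, ofInt_smul, Int.cast_sub, Int.cast_one] at this
  exact not_disjoint_iff.2 ⟨_, hmem,
    self_subset_thickening (by norm_num) _ (mem_spokes (e := ofInt ∘ endInt) m)⟩

lemma adj_iff_disjoint_obstacle (u v : Fin 11) (huv : u ≠ v) :
    B11.Adj u v ↔ Disjoint (segment ℝ (vertex u) (vertex v)) obstacle := by
  refine ⟨disjoint_segment_obstacle, fun hd => ⟨huv, ?_⟩⟩
  rintro (h | h)
  · exact not_disjoint_segment_obstacle h hd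
  · exact not_disjoint_segment_obstacle h (segment_symm ℝ (vertex u) (vertex v) ▸ hd)

lemma vertex_injective : Function.Injective vertex :=
  ofInt_injective.comp (by decide : Function.Injective vertexInt)

lemma crossInt_ne_zero : ∀ i j k : Fin 11, i ≠ j → i ≠ k → j ≠ k →
    crossInt (vertexInt j - vertexInt i) (vertexInt k - vertexInt i) ≠ 0 := by
  decide

lemma inGenPos_range_vertex : InGenPos (range vertex) := by
  rintro _ ⟨i, rfl⟩ _ ⟨j, rfl⟩ _ ⟨k, rfl⟩ hij hik hjk
  refine not_collinear_of_cross_ne_zero ?_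
  rw [vertex, vertex, vertex, ← ofInt_sub, ← ofInt_sub, cross_ofInt, Int.cast_ne_zero]
  exact crossInt_ne_zero i j k (ne_of_apply_ne _ hij) (ne_of_apply_ne _ hik)
    (ne_of_apply_ne _ hjk)

lemma disjoint_obstacle_range : Disjoint obstacle (range vertex) := by
  rw [disjoint_right]
  rintro _ ⟨v, rfl⟩
  obtain ⟨u, huv⟩ : ∃ u, B11.Adj v u := by revert v; decide
  exact disjoint_left.1 (disjoint_segment_obstacle huv) (left_mem_segment ℝ _ _)

lemma isConnected_obstacle : IsConnected obstacle :=
  ((starConvex_spokes.thickening (by norm_num)).isPathConnected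
    (self_subset_thickening (by norm_num) _ hub_mem_spokes)).isConnected

/-- The outer cycle `z₁ ⋯ z₅ z₁' ⋯ z₅'`, a convex polygon in counterclockwise order. -/
def outerInt (i : Fin 10) : ℤ × ℤ := vertexInt i.castSucc

def outer (i : Fin 10) : Plane := ofInt (outerInt i)

lemma outer_adj : ∀ i : Fin 10, B11.Adj i.castSucc (i + 1).castSucc := by
  decide

lemma outerInt_turn : ∀ i : Fin 10,
    0 < crossInt (outerInt (i + 1) - outerInt i) (outerInt (i + 1 + 1) - outerInt (i + 1)) := by
  decide

lemma outer_turn (i : Fin 10) :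
    0 < cross (outer (i + 1) - outer i) (outer (i + 1 + 1) - outer (i + 1)) := by
  simpa [outer, ← ofInt_sub, cross_ofInt] using outerInt_turn i

lemma outerInt_side : ∀ i : Fin 10, SpokesAbove (outerInt (i + 1) - outerInt i)
    (crossInt (outerInt (i + 1) - outerInt i) (outerInt i)) := by
  decide

lemma obstacle_subset_openPolygon : obstacle ⊆ openPolygon outer := fun x hx =>
  mem_iInter.2 fun i => by
    have h := lt_cross_of_mem_thickening (lt_cross_of_spokesAbove (outerInt_side i)) hx
    show 0 < cross (outer (i + 1) - outer i) (x - outer i)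
    rwa [outer, outer, ← ofInt_sub, map_sub, sub_pos, cross_ofInt]

lemma frontier_openPolygon_outer_subset :
    frontier (openPolygon outer) ⊆ edgeUnion B11 vertex :=
  (frontier_openPolygon_subset outer outer_turn).trans
    (iUnion_subset fun i => segment_subset_edgeUnion vertex (outer_adj i))

lemma disjoint_obstacle_outsideRegion : Disjoint obstacle (outsideRegion B11 vertex) :=
  disjoint_outsideRegion_of_subset (isOpen_openPolygon outer)
    (isBounded_openPolygon outer 0 (outer_turn 0))
    frontier_openPolygon_outer_subset obstacle_subset_openPolygon

end B11Rep

/-- The graph `B₁₁` has an inside-obstacle representation. -/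
theorem B11_hasInsideObstacleRep :
    ∃ (f : Fin 11 → Plane) (C : Set Plane), IsInsideObstacleRep B11 f C :=
  ⟨B11Rep.vertex, B11Rep.obstacle,
    ⟨B11Rep.vertex_injective, B11Rep.inGenPos_range_vertex, isOpen_thickening,
      B11Rep.isConnected_obstacle, B11Rep.disjoint_obstacle_range,
      B11Rep.adj_iff_disjoint_obstacle⟩,
    B11Rep.disjoint_obstacle_outsideRegion⟩

end
end

section
/- Let Z be a finite set of points in ℝ² and let C ⊆ ℝ² be a connected set such that for all z, z' ∈ Z the closed segment [z, z'] is disjoint from C. If some point of C lies outside the convex hull of Z, then C is disjoint from the convex hull of Z. -/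
/-! By Carathéodory's theorem, a point of the convex hull of `Z` is a positive convex combination
of affinely independent points of `Z`. If there are three of them, they form an affine basis of the
plane whose barycentric coordinates at the point are the positive weights, so the point is interior
to the hull. Hence every point of the hull off its interior lies on a segment `[z, z']`, and `C`
meets the hull only in its interior. The interior and the complement of the (closed) hull are then
disjoint open sets covering the connected set `C`, which meets the complement.
-/

noncomputable section

open Module

section Caratheodory

variable {E : Type*} [NormedAddCommGroup E] [NormedSpace ℝ E] [FiniteDimensional ℝ E]

lemma exists_finset_card_le_finrank_of_mem_convexHull_of_notMem_interior {s : Set E} {x : E}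
    (hx : x ∈ convexHull ℝ s) (hx' : x ∉ interior (convexHull ℝ s)) :
    ∃ t : Finset E, ↑t ⊆ s ∧ t.card ≤ finrank ℝ E ∧ x ∈ convexHull ℝ ↑t := by
  classical
  obtain ⟨ι, _, z, w, hzs, hz, hw0, hw1, rfl⟩ := eq_pos_convex_span_of_mem_convexHull hx
  refine ⟨Finset.univ.image z, by simpa [Set.range_subset_iff] using hzs, ?_, ?_⟩
  · refine Finset.card_image_le.trans (not_lt.1 fun hcard => hx' ?_)
    have hspan : affineSpan ℝ (Set.range z) = ⊤ := by
      refine hz.affineSpan_eq_top_iff_card_eq_finrank_add_one.2 (le_antisymm ?_ hcard)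
      exact hz.card_le_finrank_succ.trans (Nat.succ_le_succ (Submodule.finrank_le _))
    let b : AffineBasis ι ℝ E := ⟨z, hz, hspan⟩
    refine interior_mono (convexHull_mono hzs) ?_
    have hcomb : Finset.univ.affineCombination ℝ b w = ∑ i, w i • z i :=
      Finset.univ.affineCombination_eq_linear_combination _ _ hw1
    rw [← hcomb, show Set.range z = Set.range b from rfl, b.interior_convexHull]
    intro i
    rw [b.coord_apply_combination_of_mem (Finset.mem_univ i) hw1]
    exact hw0 i
  · exact (convex_convexHull ℝ _).sum_mem (fun i _ => (hw0 i).le) hw1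
      fun i _ => subset_convexHull ℝ _ (by simp)

lemma exists_mem_segment_of_mem_convexHull_of_notMem_interior (hE : finrank ℝ E ≤ 2)
    {s : Set E} {x : E} (hx : x ∈ convexHull ℝ s) (hx' : x ∉ interior (convexHull ℝ s)) :
    ∃ a ∈ s, ∃ b ∈ s, x ∈ segment ℝ a b := by
  classical
  obtain ⟨t, hts, hcard, hxt⟩ :=
    exists_finset_card_le_finrank_of_mem_convexHull_of_notMem_interior hx hx'
  obtain h | h | h : t.card = 0 ∨ t.card = 1 ∨ t.card = 2 := by omega
  · simp [Finset.card_eq_zero.1 h] at hxt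
  · obtain ⟨a, rfl⟩ := Finset.card_eq_one.1 h
    simp only [Finset.coe_singleton, convexHull_singleton, Set.mem_singleton_iff,
      Set.singleton_subset_iff] at hxt hts
    exact ⟨a, hts, a, hts, by simp [hxt]⟩
  · obtain ⟨a, b, -, rfl⟩ := Finset.card_eq_two.1 h
    rw [Finset.coe_pair, convexHull_pair] at hxt
    exact ⟨a, hts (by simp), b, hts (by simp), hxt⟩

end Caratheodory

/-- If `C` is a connected set avoiding every segment between points of a
finite set `Z`, and some point of `C` lies outside the convex hull of `Z`, then `C` is
disjoint from the convex hull of `Z`. -/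
theorem connected_avoiding_segments_disjoint_convexHull
    (Z : Set Plane) (hZ : Z.Finite) (C : Set Plane) (hC : IsConnected C)
    (hseg : ∀ z ∈ Z, ∀ z' ∈ Z, Disjoint (segment ℝ z z') C)
    (hout : ∃ p ∈ C, p ∉ convexHull ℝ Z) :
    Disjoint C (convexHull ℝ Z) := by
  obtain ⟨p, hpC, hpH⟩ := hout
  have hinterior : C ∩ convexHull ℝ Z ⊆ interior (convexHull ℝ Z) := by
    rintro c ⟨hcC, hcH⟩
    by_contra hc
    obtain ⟨a, ha, b, hb, hcab⟩ :=
      exists_mem_segment_of_mem_convexHull_of_notMem_interior finrank_euclideanSpace_fin.le hcH hc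
    exact Set.disjoint_left.1 (hseg a ha b hb) hcab hcC
  have hcover : C ⊆ (convexHull ℝ Z)ᶜ ∪ interior (convexHull ℝ Z) := fun c hc =>
    (em (c ∈ convexHull ℝ Z)).elim (fun hcH => Or.inr (hinterior ⟨hc, hcH⟩)) Or.inl
  exact Set.subset_compl_iff_disjoint_right.1 <|
    hC.isPreconnected.subset_left_of_subset_union (hZ.isClosed_convexHull ℝ).isOpen_compl
      isOpen_interior (disjoint_compl_left.mono_right interior_subset) hcover ⟨p, hpC, hpH⟩

end
end

section
/- In every inside-obstacle representation (f, C) of a finite simple graph G, the vertices placed on the boundary of the convex hull of the point set form a cycle of G; precisely, if u and v are distinct vertices of G such that the closed segment [f u, f v] is contained in the frontier of the convex hull of the image of f, then u and v are adjacent in G. -/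
noncomputable section

/-!
A point outside the convex hull `K` of the vertices is separated from `K` by an open half-plane,
which is connected, unbounded and disjoint from the drawing; so the point lies in the unbounded
region. An inside obstacle is therefore an open subset of `K`, hence of its interior, and cannot
meet a segment lying on the frontier of `K`.
-/

open Bornology Set

section HalfSpace

variable {E : Type*} [NormedAddCommGroup E] [NormedSpace ℝ E]

theorem not_isBounded_of_forall_add_smul_mem {s : Set E} {p w : E} (hw : w ≠ 0)
    (hs : ∀ t : ℝ, 0 ≤ t → p + t • w ∈ s) : ¬ IsBounded s := by
  intro hbdd
  obtain ⟨R, hR⟩ := hbdd.exists_norm_le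
  have hw' : 0 < ‖w‖ := norm_pos_iff.2 hw
  set t := (|R| + ‖p‖ + 1) / ‖w‖
  have ht : 0 ≤ t := by positivity
  have hnorm : ‖t • w‖ = |R| + ‖p‖ + 1 := by
    rw [norm_smul, Real.norm_of_nonneg ht, div_mul_cancel₀ _ hw'.ne']
  have htriangle : ‖t • w‖ ≤ ‖p + t • w‖ + ‖p‖ := by
    simpa using norm_sub_le (p + t • w) p
  linarith [hR _ (hs t ht), le_abs_self R]

theorem not_isBounded_halfSpace [Nontrivial E] (ℓ : StrongDual ℝ E) {c : ℝ} {p : E}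
    (hp : c < ℓ p) : ¬ IsBounded {y | c < ℓ y} := by
  obtain ⟨w, hw, hℓw⟩ : ∃ w : E, w ≠ 0 ∧ 0 ≤ ℓ w := by
    obtain ⟨w, hw⟩ := exists_ne (0 : E)
    rcases le_total 0 (ℓ w) with h | h
    · exact ⟨w, hw, h⟩
    · exact ⟨-w, neg_ne_zero.2 hw, by simpa using h⟩
  refine not_isBounded_of_forall_add_smul_mem (p := p) hw fun t ht => ?_
  show c < ℓ (p + t • w)
  rw [map_add, map_smul, smul_eq_mul]
  exact hp.trans_le (le_add_of_nonneg_right (mul_nonneg ht hℓw))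

theorem not_isBounded_connectedComponentIn_of_notMem [Nontrivial E] {K S : Set E}
    (hKconv : Convex ℝ K) (hKclosed : IsClosed K) (hKS : Kᶜ ⊆ S) {p : E} (hp : p ∉ K) :
    ¬ IsBounded (connectedComponentIn S p) := by
  obtain ⟨ℓ, c, hK, hpc⟩ := geometric_hahn_banach_closed_point hKconv hKclosed hp
  have hHS : {y | c < ℓ y} ⊆ S := fun y hy =>
    hKS fun hyK => (hK y hyK).not_gt hy
  have hHconv : Convex ℝ {y | c < ℓ y} := convex_halfSpace_gt ℓ.isLinear c
  exact fun hbdd => not_isBounded_halfSpace ℓ hpc <|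
    hbdd.subset (hHconv.isPreconnected.subset_connectedComponentIn hpc hHS)

end HalfSpace

variable {V : Type} {G : SimpleGraph V} {f : V → Plane} {C : Set Plane}

theorem edgeUnion_subset_convexHull : edgeUnion G f ⊆ convexHull ℝ (range f) :=
  iUnion_subset fun a => iUnion_subset fun b => iUnion_subset fun _ =>
    segment_subset_convexHull (mem_range_self a) (mem_range_self b)

theorem mem_outsideRegion_of_notMem_convexHull [Finite V] {p : Plane}
    (hp : p ∉ convexHull ℝ (range f)) : p ∈ outsideRegion G f := by
  have hKS : (convexHull ℝ (range f))ᶜ ⊆ (edgeUnion G f)ᶜ :=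
    compl_subset_compl.2 edgeUnion_subset_convexHull
  exact ⟨hKS hp, not_isBounded_connectedComponentIn_of_notMem (convex_convexHull ℝ _)
    ((finite_range f).isClosed_convexHull (𝕜 := ℝ)) hKS hp⟩

theorem IsInsideObstacleRep.subset_interior_convexHull [Finite V]
    (hrep : IsInsideObstacleRep G f C) : C ⊆ interior (convexHull ℝ (range f)) := by
  obtain ⟨⟨-, -, hCopen, -, -, -⟩, hCout⟩ := hrep
  refine interior_maximal (fun p hpC => ?_) hCopen
  by_contra hpK
  exact disjoint_left.1 hCout hpC (mem_outsideRegion_of_notMem_convexHull hpK)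

/-- In an inside-obstacle representation, the vertices on the boundary
of the convex hull of the point set form a cycle: if the segment between the points of two
distinct vertices lies in the frontier of the convex hull of the image, then the two
vertices are adjacent. -/
theorem insideObstacleRep_hull_boundary_adjacent
    {V : Type} [Fintype V] (G : SimpleGraph V) (f : V → Plane) (C : Set Plane)
    (hrep : IsInsideObstacleRep G f C) (u v : V) (huv : u ≠ v)
    (hseg : segment ℝ (f u) (f v) ⊆ frontier (convexHull ℝ (Set.range f))) :
    G.Adj u v := by
  have hCint := hrep.subset_interior_convexHull
  obtain ⟨⟨-, -, -, -, -, hadj⟩, -⟩ := hrep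
  rw [hadj u v huv]
  exact (disjoint_interior_frontier.mono hCint hseg).symm

end
end

section
/- Let (f, C) be an inside-obstacle representation of a finite simple graph G, and suppose u x y v is an induced path of G on four vertices (so ux, xy, yv are edges and uv, uy, xv are non-edges), where f(u) and f(v) lie on the frontier of the convex hull of the image of f, while f(x) and f(y) do not lie on that frontier. Then the closed segments [f u, f x] and [f y, f v] are disjoint, and the quadrilateral with vertices f(u), f(x), f(y), f(v) in this cyclic order is convex; in particular, the closed segments [f u, f y] and [f x, f v] intersect. -/
noncomputable section

/-!
Write `A B D E` for the images of `u x y v` and `E = γ • A + α • B + β • D`, `γ + α + β = 1`,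
for the barycentric coordinates of `E` in the triangle `A B D`. A supporting line of the hull at
`A` keeps `B`, `D` and the obstacle strictly on one side, so the obstacle meets the line `AB`
only beyond `B` and avoids the cone at `A` opposite to `B` and `D`; symmetrically at `E`. The
obstacle is connected, avoids the edges and meets the non-edges `AD`, `AE`, `BE`, so the
intermediate value theorem for a piecewise affine function on it shows that `AB` and `DE` do
not cross and that the line `BD` does not separate `A` from `E`. The supporting lines also show
that neither `A` nor `E` lies inside the triangle of the other three points. With general
position this leaves only `γ > 0`, `α < 0`, `β > 0`, which says that `AD` and `BE` cross.
-/

open Set AffineMap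

attribute [local fun_prop] AffineMap.continuous_of_finiteDimensional

theorem AffineMap.apply_smul_add_smul_add_smul {k V W : Type*} [CommRing k] [AddCommGroup V]
    [Module k V] [AddCommGroup W] [Module k W] (φ : V →ᵃ[k] W) {a b c : k} (h : a + b + c = 1)
    (p q r : V) : φ (a • p + b • q + c • r) = a • φ p + b • φ q + c • φ r := by
  obtain rfl : c = 1 - a - b := by rw [← h]; ring
  rw [φ.decomp]
  simp only [Pi.add_apply, map_add, map_smul]
  module

theorem eq_inv_smul_add_smul_add_smul {k V : Type*} [Field k] [AddCommGroup V] [Module k V]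
    {p q r w : V} {a b c : k} (ha : a ≠ 0) (hsum : a + b + c = 1)
    (h : p = a • q + b • r + c • w) :
    a⁻¹ + -c / a + -b / a = 1 ∧ q = a⁻¹ • p + (-c / a) • w + (-b / a) • r := by
  refine ⟨by field_simp; linear_combination -hsum, ?_⟩
  rw [h]
  match_scalars <;> field_simp <;> ring

theorem exists_affine_coords_of_not_collinear {V : Type*} [AddCommGroup V] [Module ℝ V]
    [FiniteDimensional ℝ V] (hV : Module.finrank ℝ V = 2) {P Q R : V}
    (h : ¬ Collinear ℝ {P, Q, R}) :
    ∃ x y : V →ᵃ[ℝ] ℝ, x P = 0 ∧ x Q = 1 ∧ x R = 0 ∧ y P = 0 ∧ y Q = 0 ∧ y R = 1 ∧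
      ∀ z, z = (1 - x z - y z) • P + x z • Q + y z • R := by
  have hind := affineIndependent_iff_not_collinear_set.2 h
  have htop := hind.affineSpan_eq_top_iff_card_eq_finrank_add_one.2 (by simp [hV])
  let b : AffineBasis (Fin 3) ℝ V := ⟨![P, Q, R], hind, htop⟩
  have hb : ⇑b = ![P, Q, R] := rfl
  have hcoord : ∀ i j, b.coord i (![P, Q, R] j) = if i = j then 1 else 0 := by
    intro i j
    rw [← hb]
    split_ifs with hij
    · rw [hij, b.coord_apply_eq]
    · exact b.coord_apply_ne hij
  refine ⟨b.coord 1, b.coord 2, hcoord 1 0, hcoord 1 1, hcoord 1 2, hcoord 2 0, hcoord 2 1,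
    hcoord 2 2, fun z => ?_⟩
  have hsum := b.sum_coord_apply_eq_one z
  have hz := b.linear_combination_coord_eq_self z
  simp only [Fin.sum_univ_three, hb, Matrix.cons_val_zero, Matrix.cons_val_one,
    Matrix.cons_val_two, Matrix.head_cons, Matrix.tail_cons] at hsum hz
  rw [show b.coord 0 z = 1 - b.coord 1 z - b.coord 2 z by linarith] at hz
  exact hz.symm

theorem exists_lineMap_mem_of_segment_inter_nonempty {V : Type*} [AddCommGroup V]
    [Module ℝ V] {P Q : V} {C : Set V} (h : (segment ℝ P Q ∩ C).Nonempty) (hP : P ∉ C)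
    (hQ : Q ∉ C) :
    ∃ r ∈ Ioo (0 : ℝ) 1, lineMap P Q r ∈ C := by
  obtain ⟨z, hz, hzC⟩ := h
  rw [segment_eq_image_lineMap] at hz
  obtain ⟨r, ⟨hr0, hr1⟩, rfl⟩ := hz
  refine ⟨r, ⟨hr0.lt_of_ne ?_, hr1.lt_of_ne ?_⟩, hzC⟩ <;> rintro rfl
  · exact hP (by simpa using hzC)
  · exact hQ (by simpa using hzC)

theorem Convex.exists_forall_lt_of_notMem_interior {E : Type*} [NormedAddCommGroup E]
    [NormedSpace ℝ E] {K : Set E} (hK : Convex ℝ K) (hint : (interior K).Nonempty) {p : E}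
    (hp : p ∉ interior K) :
    ∃ φ : E →L[ℝ] ℝ, (∀ z ∈ interior K, φ z < φ p) ∧ ∀ z ∈ K, φ z ≤ φ p := by
  obtain ⟨φ, hφ⟩ := geometric_hahn_banach_open_point hK.interior isOpen_interior hp
  have hcl : closure (interior K) ⊆ {z | φ z ≤ φ p} :=
    closure_minimal (fun w hw => (hφ w hw).le) (isClosed_le φ.continuous continuous_const)
  rw [hK.closure_interior_eq_closure_of_nonempty_interior hint] at hcl
  exact ⟨φ, hφ, fun z hz => hcl (subset_closure hz)⟩

theorem IsInsideObstacleRep.subset_convexHull {V : Type} [Nonempty V] {G : SimpleGraph V}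
    {f : V → Plane} {C : Set Plane} (h : IsInsideObstacleRep G f C) :
    C ⊆ convexHull ℝ (range f) := by
  set K := convexHull ℝ (range f)
  intro z hzC
  by_contra hzK
  obtain ⟨a, haK⟩ : K.Nonempty := (range_nonempty f).convexHull
  have hedge : edgeUnion G f ⊆ K := by
    simp only [edgeUnion, iUnion_subset_iff]
    exact fun u v _ => (convex_convexHull ℝ _).segment_subset
      (_root_.subset_convexHull ℝ _ (mem_range_self u))
      (_root_.subset_convexHull ℝ _ (mem_range_self v))
  -- Beyond `z`, the ray from `a ∈ K` through `z` stays outside the convex set `K`, so the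
  -- component of `z` is unbounded.
  have hray : lineMap a z '' Ici (1 : ℝ) ⊆ (edgeUnion G f)ᶜ := by
    rintro _ ⟨t, ht, rfl⟩ hw
    refine hzK ?_
    have ht0 : (0 : ℝ) < t := zero_lt_one.trans_le ht
    have := (convex_convexHull ℝ _).lineMap_mem haK (hedge hw)
      ⟨inv_nonneg.2 ht0.le, inv_le_one_of_one_le₀ ht⟩
    rwa [lineMap_lineMap_right, inv_mul_cancel₀ ht0.ne', lineMap_apply_one] at this
  have hcomp : lineMap a z '' Ici (1 : ℝ) ⊆ connectedComponentIn (edgeUnion G f)ᶜ z :=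
    (isPreconnected_Ici.image _ lineMap_continuous.continuousOn).subset_connectedComponentIn
      ⟨1, self_mem_Ici, lineMap_apply_one a z⟩ hray
  have hbdd : Bornology.IsBounded (connectedComponentIn (edgeUnion G f)ᶜ z) :=
    not_not.1 fun hnb => disjoint_left.1 h.2 hzC ⟨fun hzE => hzK (hedge hzE), hnb⟩
  obtain ⟨r, hr⟩ := (Metric.isBounded_iff_subset_closedBall a).1 (hbdd.subset hcomp)
  have hdist : 0 < dist a z := dist_pos.2 (ne_of_mem_of_not_mem haK hzK)
  set t := max 1 ((r + 1) / dist a z)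
  have hmem := hr ⟨t, mem_Ici.2 (le_max_left _ _), rfl⟩
  rw [Metric.mem_closedBall, dist_lineMap_left, Real.norm_of_nonneg (by positivity)] at hmem
  have : (r + 1) / dist a z * dist a z ≤ t * dist a z := by gcongr; exact le_max_right _ _
  rw [div_mul_cancel₀ _ hdist.ne'] at this
  linarith

theorem IsInsideObstacleRep.exists_support {V : Type} {G : SimpleGraph V} {f : V → Plane}
    {C : Set Plane} (h : IsInsideObstacleRep G f C) {a b : V}
    (ha : f a ∈ frontier (convexHull ℝ (range f)))
    (hb : f b ∉ frontier (convexHull ℝ (range f))) :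
    ∃ φ : Plane →L[ℝ] ℝ,
      (∀ w, f w ∉ frontier (convexHull ℝ (range f)) → φ (f w) < φ (f a)) ∧
      (∀ w, φ (f w) ≤ φ (f a)) ∧ ∀ z ∈ C, φ z < φ (f a) := by
  have : Nonempty V := ⟨b⟩
  have hCK := h.subset_convexHull
  obtain ⟨⟨-, -, hCopen, -⟩, -⟩ := h
  have hmem : ∀ w, f w ∈ convexHull ℝ (range f) :=
    fun w => _root_.subset_convexHull ℝ _ (mem_range_self w)
  have hint : ∀ w, f w ∉ frontier (convexHull ℝ (range f)) →
      f w ∈ interior (convexHull ℝ (range f)) :=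
    fun w hw => not_not.1 fun hi => hw ⟨subset_closure (hmem w), hi⟩
  obtain ⟨φ, hlt, hle⟩ :=
    (convex_convexHull ℝ _).exists_forall_lt_of_notMem_interior ⟨_, hint b hb⟩ ha.2
  exact ⟨φ, fun w hw => hlt _ (hint w hw), fun w => hle _ (hmem w),
    fun z hz => hlt z (interior_maximal hCK hCopen hz)⟩

/-- The points `A B D E` are the images of the induced path `u x y v`. The supporting
functionals at `A` and `E` encode that `A` and `E` lie on the frontier of the convex hull of
the drawing while `B`, `D` and the obstacle `C` lie in its interior. -/
structure InducedPathObstacle (C : Set Plane) (A B D E : Plane) : Prop where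
  isPreconnected : IsPreconnected C
  not_collinear_ABD : ¬ Collinear ℝ {A, B, D}
  not_collinear_EBD : ¬ Collinear ℝ {E, B, D}
  not_collinear_EAD : ¬ Collinear ℝ {E, A, D}
  not_collinear_EAB : ¬ Collinear ℝ {E, A, B}
  disjoint_AB : Disjoint (segment ℝ A B) C
  disjoint_BD : Disjoint (segment ℝ B D) C
  disjoint_DE : Disjoint (segment ℝ D E) C
  inter_AD : (segment ℝ A D ∩ C).Nonempty
  inter_AE : (segment ℝ A E ∩ C).Nonempty
  inter_BE : (segment ℝ B E ∩ C).Nonempty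
  support_A : ∃ φ : Plane →L[ℝ] ℝ,
    φ B < φ A ∧ φ D < φ A ∧ φ E ≤ φ A ∧ ∀ z ∈ C, φ z < φ A
  support_E : ∃ φ : Plane →L[ℝ] ℝ,
    φ D < φ E ∧ φ B < φ E ∧ φ A ≤ φ E ∧ ∀ z ∈ C, φ z < φ E

namespace InducedPathObstacle

variable {C : Set Plane} {A B D E : Plane}

theorem reverse (h : InducedPathObstacle C A B D E) : InducedPathObstacle C E D B A where
  isPreconnected := h.isPreconnected
  not_collinear_ABD := by rw [Set.pair_comm]; exact h.not_collinear_EBD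
  not_collinear_EBD := by rw [Set.pair_comm]; exact h.not_collinear_ABD
  not_collinear_EAD := by rw [Set.insert_comm]; exact h.not_collinear_EAB
  not_collinear_EAB := by rw [Set.insert_comm]; exact h.not_collinear_EAD
  disjoint_AB := segment_symm ℝ D E ▸ h.disjoint_DE
  disjoint_BD := segment_symm ℝ B D ▸ h.disjoint_BD
  disjoint_DE := segment_symm ℝ A B ▸ h.disjoint_AB
  inter_AD := segment_symm ℝ B E ▸ h.inter_BE
  inter_AE := segment_symm ℝ A E ▸ h.inter_AE
  inter_BE := segment_symm ℝ A D ▸ h.inter_AD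
  support_A := h.support_E
  support_E := h.support_A

theorem A_notMem (h : InducedPathObstacle C A B D E) : A ∉ C :=
  disjoint_left.1 h.disjoint_AB (left_mem_segment ℝ A B)

theorem B_notMem (h : InducedPathObstacle C A B D E) : B ∉ C :=
  disjoint_left.1 h.disjoint_AB (right_mem_segment ℝ A B)

theorem D_notMem (h : InducedPathObstacle C A B D E) : D ∉ C :=
  disjoint_left.1 h.disjoint_DE (left_mem_segment ℝ D E)

theorem E_notMem (h : InducedPathObstacle C A B D E) : E ∉ C :=
  disjoint_left.1 h.disjoint_DE (right_mem_segment ℝ D E)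

theorem exists_lineMap_AD_mem (h : InducedPathObstacle C A B D E) :
    ∃ r ∈ Ioo (0 : ℝ) 1, lineMap A D r ∈ C :=
  exists_lineMap_mem_of_segment_inter_nonempty h.inter_AD h.A_notMem h.D_notMem

theorem exists_lineMap_AE_mem (h : InducedPathObstacle C A B D E) :
    ∃ r ∈ Ioo (0 : ℝ) 1, lineMap A E r ∈ C :=
  exists_lineMap_mem_of_segment_inter_nonempty h.inter_AE h.A_notMem h.E_notMem

theorem exists_lineMap_BE_mem (h : InducedPathObstacle C A B D E) :
    ∃ r ∈ Ioo (0 : ℝ) 1, lineMap B E r ∈ C :=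
  exists_lineMap_mem_of_segment_inter_nonempty h.inter_BE h.B_notMem h.E_notMem

theorem one_lt_of_lineMap_AB_mem (h : InducedPathObstacle C A B D E) {r : ℝ}
    (hr : lineMap A B r ∈ C) : 1 < r := by
  obtain ⟨φ, hB, -, -, hC⟩ := h.support_A
  have hφr := hC _ hr
  rw [lineMap_apply_module, map_add, map_smul, map_smul, smul_eq_mul, smul_eq_mul] at hφr
  have hr0 : 0 < r := by nlinarith
  by_contra! hr1
  exact disjoint_left.1 h.disjoint_AB (lineMap_mem_segment ℝ A B ⟨hr0.le, hr1⟩) hr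

theorem one_lt_of_lineMap_ED_mem (h : InducedPathObstacle C A B D E) {r : ℝ}
    (hr : lineMap E D r ∈ C) : 1 < r :=
  h.reverse.one_lt_of_lineMap_AB_mem hr

theorem lt_zero_or_one_lt_of_lineMap_BD_mem (h : InducedPathObstacle C A B D E) {r : ℝ}
    (hr : lineMap B D r ∈ C) : r < 0 ∨ 1 < r := by
  by_contra! hr01
  exact disjoint_left.1 h.disjoint_BD (lineMap_mem_segment ℝ B D hr01) hr

theorem pos_or_pos_of_mem (h : InducedPathObstacle C A B D E) {z : Plane} (hz : z ∈ C)
    {b d : ℝ} (hz' : z = (1 - b - d) • A + b • B + d • D) : 0 < b ∨ 0 < d := by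
  obtain ⟨φ, hB, hD, -, hC⟩ := h.support_A
  have hφz := hC z hz
  rw [hz', map_add, map_add, map_smul, map_smul, map_smul, smul_eq_mul, smul_eq_mul,
    smul_eq_mul] at hφz
  by_contra! hbd
  nlinarith [mul_nonneg_of_nonpos_of_nonpos hbd.1 (sub_nonpos.2 hB.le),
    mul_nonneg_of_nonpos_of_nonpos hbd.2 (sub_nonpos.2 hD.le)]

/-! For `E = γ • A + α • B + β • D`, the configurations excluded below are: `AB` crossing
`DE` (`γ, α > 0 > β`), the line `BD` separating `A` from `E` (`γ < 0`), and `E` inside the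
triangle `A B D` (`γ, α, β > 0`). -/

variable {γ α β : ℝ}

theorem exists_coords_ABD (h : InducedPathObstacle C A B D E) (hsum : γ + α + β = 1)
    (hE : E = γ • A + α • B + β • D) :
    ∃ s t : Plane →ᵃ[ℝ] ℝ, s A = 0 ∧ s B = 1 ∧ s D = 0 ∧ s E = α ∧
      t A = 0 ∧ t B = 0 ∧ t D = 1 ∧ t E = β ∧
      ∀ z, z = (1 - s z - t z) • A + s z • B + t z • D := by
  obtain ⟨s, t, hsA, hsB, hsD, htA, htB, htD, hABD⟩ :=
    exists_affine_coords_of_not_collinear finrank_euclideanSpace_fin h.not_collinear_ABD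
  refine ⟨s, t, hsA, hsB, hsD, ?_, htA, htB, htD, ?_, hABD⟩
  · simp [hE, s.apply_smul_add_smul_add_smul hsum, hsA, hsB, hsD]
  · simp [hE, t.apply_smul_add_smul_add_smul hsum, htA, htB, htD]

theorem exists_functional_ED (h : InducedPathObstacle C A B D E) (hsum : γ + α + β = 1)
    (hE : E = γ • A + α • B + β • D) :
    ∃ m : Plane →ᵃ[ℝ] ℝ, m A = 1 ∧ m D = 0 ∧ m E = 0 ∧ α * m B = -γ ∧
      ∀ z, m z = 0 → ∃ r : ℝ, z = lineMap E D r := by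
  obtain ⟨u, m, -, -, -, hmE, hmD, hmA, hEDA⟩ := exists_affine_coords_of_not_collinear
    finrank_euclideanSpace_fin (Set.pair_comm A D ▸ h.not_collinear_EAD)
  refine ⟨m, hmA, hmD, hmE, ?_, fun z hz => ⟨u z, ?_⟩⟩
  · have := congrArg m hE
    simp only [m.apply_smul_add_smul_add_smul hsum, hmE, hmA, hmD, smul_eq_mul] at this
    linarith
  · nth_rw 1 [hEDA z]
    simp [hz, lineMap_apply_module]

theorem coeff_D_pos_of_lineMap_ED_mem (h : InducedPathObstacle C A B D E)
    (hsum : γ + α + β = 1) (hE : E = γ • A + α • B + β • D) (hα : 0 < α) {r : ℝ}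
    (hr : lineMap E D r ∈ C) : 0 < (1 - r) * β + r := by
  have hr1 := h.one_lt_of_lineMap_ED_mem hr
  refine (h.pos_or_pos_of_mem hr (b := (1 - r) * α) ?_).resolve_left (by nlinarith)
  rw [lineMap_apply_module, hE, show γ = 1 - α - β by linarith]
  module

theorem coeff_D_nonneg_of_coeff_B_pos (h : InducedPathObstacle C A B D E)
    (hsum : γ + α + β = 1) (hE : E = γ • A + α • B + β • D) (hγ : 0 < γ) (hα : 0 < α) :
    0 ≤ β := by
  by_contra! hβ
  obtain ⟨s, t, -, -, -, -, htA, htB, htD, htE, hABD⟩ := h.exists_coords_ABD hsum hE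
  obtain ⟨m, hmA, hmD, hmE, hmB, hmzero⟩ := h.exists_functional_ED hsum hE
  obtain ⟨r₁, hr₁, hc₁⟩ := h.exists_lineMap_AD_mem
  obtain ⟨r₂, hr₂, hc₂⟩ := h.exists_lineMap_AE_mem
  -- The open wedge `{t < 0 < m}` at the crossing point is bounded by parts of the walls `AB`,
  -- `DE` and by rays beyond `A` and `E`; the obstacle meets it on `AE` and leaves it on `AD`.
  have hφ : Continuous fun z => max (t z) (-m z) := by fun_prop
  obtain ⟨z, hzC, hz⟩ := h.isPreconnected.intermediate_value₂ hc₂ hc₁ hφ.continuousOn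
    (continuousOn_const (c := (0 : ℝ)))
    (by simp only [apply_lineMap, lineMap_apply_ring, htA, htE, hmA, hmE, max_le_iff]
        constructor <;> nlinarith [hr₂.1, hr₂.2])
    (by simp only [apply_lineMap, lineMap_apply_ring, htA, htD]
        exact le_max_of_le_left (by nlinarith [hr₁.1]))
  have ht : t z ≤ 0 := hz ▸ le_max_left _ _
  have hm : 0 ≤ m z := by linarith [hz ▸ le_max_right (t z) (-m z)]
  rcases max_choice (t z) (-m z) with hmax | hmax <;> rw [hmax] at hz
  · obtain ⟨r, rfl⟩ : ∃ r, z = lineMap A B r :=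
      ⟨s z, by nth_rw 1 [hABD z]; simp [hz, lineMap_apply_module]⟩
    have hr := h.one_lt_of_lineMap_AB_mem hzC
    rw [apply_lineMap, lineMap_apply_ring, hmA] at hm
    nlinarith
  · obtain ⟨r, rfl⟩ := hmzero z (neg_eq_zero.1 hz)
    have hr := h.one_lt_of_lineMap_ED_mem hzC
    rw [apply_lineMap, lineMap_apply_ring, htE, htD] at ht
    nlinarith

theorem coeff_A_nonneg_of_coeff_B_pos (h : InducedPathObstacle C A B D E)
    (hsum : γ + α + β = 1) (hE : E = γ • A + α • B + β • D) (hα : 0 < α) : 0 ≤ γ := by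
  by_contra! hγ
  obtain ⟨s, t, hsA, hsB, hsD, hsE, htA, htB, htD, htE, hABD⟩ := h.exists_coords_ABD hsum hE
  obtain ⟨m, hmA, hmD, hmE, hmB, hmzero⟩ := h.exists_functional_ED hsum hE
  obtain ⟨r₁, hr₁, hc₁⟩ := h.exists_lineMap_AD_mem
  obtain ⟨r₃, hr₃, hc₃⟩ := h.exists_lineMap_BE_mem
  -- `1 - s - t` is the coordinate of `A`, negative at `E`. The region `{0 < m} ∩ {t < 0 ∨
  -- 1 - s - t < 0}` contains the point of `C` on `BE` but not the one on `AD`, and its boundary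
  -- points in `C` would lie on the walls or in the cone at `A` opposite to `B` and `D`.
  have hφ : Continuous fun z => max (-m z) (min (t z) (1 - s z - t z)) := by fun_prop
  obtain ⟨z, hzC, hz⟩ := h.isPreconnected.intermediate_value₂ hc₃ hc₁ hφ.continuousOn
    (continuousOn_const (c := (0 : ℝ)))
    (by simp only [apply_lineMap, lineMap_apply_ring, hsB, hsE, htB, htE, hmE]
        refine max_le (by nlinarith [hr₃.2]) (min_le_of_right_le ?_)
        nlinarith [hr₃.1])
    (by simp only [apply_lineMap, lineMap_apply_ring, hsA, hsD, htA, htD]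
        exact le_max_of_le_right (le_min (by nlinarith [hr₁.1]) (by nlinarith [hr₁.2])))
  have hm : 0 ≤ m z := by linarith [hz ▸ le_max_left (-m z) (min (t z) (1 - s z - t z))]
  have hmin : min (t z) (1 - s z - t z) ≤ 0 := hz ▸ le_max_right _ _
  rcases max_choice (-m z) (min (t z) (1 - s z - t z)) with hmax | hmax <;> rw [hmax] at hz
  · obtain ⟨r, rfl⟩ := hmzero z (neg_eq_zero.1 hz)
    have hr := h.one_lt_of_lineMap_ED_mem hzC
    have ht := h.coeff_D_pos_of_lineMap_ED_mem hsum hE hα hzC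
    simp only [apply_lineMap, lineMap_apply_ring, hsE, hsD, htE, htD] at hmin
    rcases min_le_iff.1 hmin with hle | hle <;> nlinarith
  · rcases min_choice (t z) (1 - s z - t z) with hmin' | hmin' <;> rw [hmin'] at hz
    · have hA := min_eq_left_iff.1 hmin'
      obtain ⟨r, rfl⟩ : ∃ r, z = lineMap A B r :=
        ⟨s z, by nth_rw 1 [hABD z]; simp [hz, lineMap_apply_module]⟩
      have hr := h.one_lt_of_lineMap_AB_mem hzC
      simp only [apply_lineMap, lineMap_apply_ring, hsA, hsB, htA, htB] at hA
      linarith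
    · have ht : 0 ≤ t z := by linarith [min_eq_right_iff.1 hmin']
      obtain ⟨r, rfl⟩ : ∃ r, z = lineMap B D r :=
        ⟨t z, by
          nth_rw 1 [hABD z]
          rw [hz, zero_smul, zero_add, lineMap_apply_module, show s z = 1 - t z by linarith]⟩
      simp only [apply_lineMap, lineMap_apply_ring, htB, htD] at ht
      rcases h.lt_zero_or_one_lt_of_lineMap_BD_mem hzC with hr | hr
      · linarith
      · rw [apply_lineMap, lineMap_apply_ring, hmD] at hm
        nlinarith

theorem coeff_A_nonneg (h : InducedPathObstacle C A B D E) (hsum : γ + α + β = 1)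
    (hE : E = γ • A + α • B + β • D) : 0 ≤ γ := by
  by_contra! hγ
  rcases lt_or_ge 0 α with hα | hα
  · exact hγ.not_ge (h.coeff_A_nonneg_of_coeff_B_pos hsum hE hα)
  · obtain ⟨hsum', hA⟩ := eq_inv_smul_add_smul_add_smul hγ.ne hsum hE
    exact (inv_lt_zero.2 hγ).not_ge <| h.reverse.coeff_A_nonneg_of_coeff_B_pos hsum' hA
      (div_pos_of_neg_of_neg (by linarith) hγ)

theorem coeff_D_nonpos_of_coeff_B_pos (h : InducedPathObstacle C A B D E)
    (hsum : γ + α + β = 1) (hE : E = γ • A + α • B + β • D) (hγ : 0 ≤ γ) (hα : 0 < α) :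
    β ≤ 0 := by
  by_contra! hβ
  obtain ⟨φ, hD, hB, hA, -⟩ := h.support_E
  have hφE := congrArg φ hE
  rw [map_add, map_add, map_smul, map_smul, map_smul, smul_eq_mul, smul_eq_mul,
    smul_eq_mul] at hφE
  have : (γ + α + β) * φ E = φ E := by rw [hsum, one_mul]
  nlinarith [mul_le_mul_of_nonneg_left hA hγ, mul_lt_mul_of_pos_left hB hα,
    mul_lt_mul_of_pos_left hD hβ]

theorem coeffs_ne_zero (h : InducedPathObstacle C A B D E) (hsum : γ + α + β = 1)
    (hE : E = γ • A + α • B + β • D) : γ ≠ 0 ∧ α ≠ 0 ∧ β ≠ 0 := by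
  refine ⟨fun hγ => h.not_collinear_EBD ?_, fun hα => h.not_collinear_EAD ?_,
    fun hβ => h.not_collinear_EAB ?_⟩ <;> refine collinear_insert_of_mem_affineSpan_pair ?_
  · convert lineMap_mem_affineSpan_pair β B D using 1
    rw [hE, hγ, lineMap_apply_module, show α = 1 - β by linarith]; simp
  · convert lineMap_mem_affineSpan_pair β A D using 1
    rw [hE, hα, lineMap_apply_module, show γ = 1 - β by linarith]; simp
  · convert lineMap_mem_affineSpan_pair α A B using 1
    rw [hE, hβ, lineMap_apply_module, show γ = 1 - α by linarith]; simp

theorem exists_affine_combination (h : InducedPathObstacle C A B D E) :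
    ∃ γ α β : ℝ, 0 < γ ∧ α < 0 ∧ 0 < β ∧ γ + α + β = 1 ∧ E = γ • A + α • B + β • D := by
  obtain ⟨s, t, -, -, -, -, -, -, hABD⟩ :=
    exists_affine_coords_of_not_collinear finrank_euclideanSpace_fin h.not_collinear_ABD
  have hE := hABD E
  generalize s E = α, t E = β at hE
  have hsum : (1 - α - β) + α + β = 1 := by ring
  obtain ⟨hγ0, hα0, hβ0⟩ := h.coeffs_ne_zero hsum hE
  have hγ : 0 < 1 - α - β := (h.coeff_A_nonneg hsum hE).lt_of_ne' hγ0
  have hα : α < 0 := by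
    refine lt_of_le_of_ne (not_lt.1 fun hα => hβ0 ?_) hα0
    exact le_antisymm (h.coeff_D_nonpos_of_coeff_B_pos hsum hE hγ.le hα)
      (h.coeff_D_nonneg_of_coeff_B_pos hsum hE hγ hα)
  have hβ : 0 < β := by
    refine (not_lt.1 fun hβ => ?_).lt_of_ne' hβ0
    obtain ⟨hsum', hA⟩ := eq_inv_smul_add_smul_add_smul hγ0 hsum hE
    have := h.reverse.coeff_D_nonpos_of_coeff_B_pos hsum' hA (inv_nonneg.2 hγ.le)
      (div_pos (neg_pos.2 hβ) hγ)
    exact (div_pos (neg_pos.2 hα) hγ).not_ge this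
  exact ⟨_, _, _, hγ, hα, hβ, hsum, hE⟩

theorem disjoint_segment_AB_DE (h : InducedPathObstacle C A B D E) :
    Disjoint (segment ℝ A B) (segment ℝ D E) := by
  obtain ⟨γ, α, β, -, -, hβ, hsum, hE⟩ := h.exists_affine_combination
  obtain ⟨-, t, -, -, -, -, htA, htB, htD, htE, -⟩ := h.exists_coords_ABD hsum hE
  rw [segment_eq_image_lineMap, segment_eq_image_lineMap, Set.disjoint_iff]
  rintro _ ⟨⟨σ, -, rfl⟩, ρ, hρ, hρσ⟩
  have := congrArg t hρσ
  simp only [apply_lineMap, lineMap_apply_ring, htA, htB, htD, htE] at this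
  nlinarith [mul_nonneg hρ.1 hβ.le, hρ.2]

theorem segment_AD_inter_BE_nonempty (h : InducedPathObstacle C A B D E) :
    (segment ℝ A D ∩ segment ℝ B E).Nonempty := by
  obtain ⟨γ, α, β, hγ, hα, hβ, hsum, hE⟩ := h.exists_affine_combination
  have hα' : 0 < 1 - α := by linarith
  refine ⟨lineMap A D (β / (1 - α)), lineMap_mem_segment ℝ A D ⟨by positivity, ?_⟩, ?_⟩
  · rw [div_le_one hα']; linarith
  · convert lineMap_mem_segment ℝ B E (t := 1 / (1 - α)) ⟨by positivity, ?_⟩ using 1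
    · rw [lineMap_apply_module, lineMap_apply_module, hE, show γ = 1 - α - β by linarith]
      match_scalars <;> field_simp
      ring
    · rw [div_le_one hα']; linarith

end InducedPathObstacle

theorem insideObstacleRep_induced_path_convex_quadrilateral_general
    {V : Type} (G : SimpleGraph V) (f : V → Plane) (C : Set Plane)
    (hrep : IsInsideObstacleRep G f C) (u x y v : V)
    (hdistinct : [u, x, y, v].Pairwise (· ≠ ·))
    (he₁ : G.Adj u x) (he₂ : G.Adj x y) (he₃ : G.Adj y v)
    (hn₁ : ¬ G.Adj u v) (hn₂ : ¬ G.Adj u y) (hn₃ : ¬ G.Adj x v)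
    (hu : f u ∈ frontier (convexHull ℝ (Set.range f)))
    (hv : f v ∈ frontier (convexHull ℝ (Set.range f)))
    (hx : f x ∉ frontier (convexHull ℝ (Set.range f)))
    (hy : f y ∉ frontier (convexHull ℝ (Set.range f))) :
    Disjoint (segment ℝ (f u) (f x)) (segment ℝ (f y) (f v)) ∧
    (segment ℝ (f u) (f y) ∩ segment ℝ (f x) (f v)).Nonempty := by
  obtain ⟨φA, hφAint, hφA, hφAC⟩ := hrep.exists_support hu hx
  obtain ⟨φE, hφEint, hφE, hφEC⟩ := hrep.exists_support hv hx
  obtain ⟨⟨hinj, hgen, -, hCconn, -, hadj⟩, -⟩ := hrep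
  simp only [List.pairwise_cons, List.mem_cons, forall_eq_or_imp, List.not_mem_nil,
    List.Pairwise.nil] at hdistinct
  obtain ⟨⟨hux, huy, huv, -⟩, ⟨hxy, hxv, -⟩, ⟨hyv, -⟩, -⟩ := hdistinct
  have hgp : ∀ {a b c : V}, a ≠ b → a ≠ c → b ≠ c → ¬ Collinear ℝ {f a, f b, f c} :=
    fun hab hac hbc => hgen _ (mem_range_self _) _ (mem_range_self _) _ (mem_range_self _)
      (hinj.ne hab) (hinj.ne hac) (hinj.ne hbc)
  have hwall : ∀ {a b}, G.Adj a b → Disjoint (segment ℝ (f a) (f b)) C :=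
    fun hab => (hadj _ _ hab.ne).1 hab
  have hmeet : ∀ {a b}, a ≠ b → ¬ G.Adj a b → (segment ℝ (f a) (f b) ∩ C).Nonempty :=
    fun hab hn => not_disjoint_iff_nonempty_inter.1 fun hd => hn ((hadj _ _ hab).2 hd)
  have hpath : InducedPathObstacle C (f u) (f x) (f y) (f v) :=
    { isPreconnected := hCconn.isPreconnected
      not_collinear_ABD := hgp hux huy hxy
      not_collinear_EBD := hgp hxv.symm hyv.symm hxy
      not_collinear_EAD := hgp huv.symm hyv.symm huy
      not_collinear_EAB := hgp huv.symm hxv.symm hux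
      disjoint_AB := hwall he₁
      disjoint_BD := hwall he₂
      disjoint_DE := hwall he₃
      inter_AD := hmeet huy hn₂
      inter_AE := hmeet huv hn₁
      inter_BE := hmeet hxv hn₃
      support_A := ⟨φA, hφAint x hx, hφAint y hy, hφA v, hφAC⟩
      support_E := ⟨φE, hφEint y hy, hφEint x hx, hφE u, hφEC⟩ }
  exact ⟨hpath.disjoint_segment_AB_DE, hpath.segment_AD_inter_BE_nonempty⟩

/-- In an inside-obstacle representation, for an induced path `u x y v`
with `f u, f v` on the frontier of the convex hull of the point set and `f x, f y` not on
it, the segments `[f u, f x]` and `[f y, f v]` are disjoint and the quadrilateral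
`f u, f x, f y, f v` is convex, i.e. its diagonals `[f u, f y]` and `[f x, f v]`
intersect. -/
theorem insideObstacleRep_induced_path_convex_quadrilateral
    {V : Type} [Fintype V] (G : SimpleGraph V) (f : V → Plane) (C : Set Plane)
    (hrep : IsInsideObstacleRep G f C) (u x y v : V)
    (hdistinct : [u, x, y, v].Pairwise (· ≠ ·))
    (he₁ : G.Adj u x) (he₂ : G.Adj x y) (he₃ : G.Adj y v)
    (hn₁ : ¬ G.Adj u v) (hn₂ : ¬ G.Adj u y) (hn₃ : ¬ G.Adj x v)
    (hu : f u ∈ frontier (convexHull ℝ (Set.range f)))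
    (hv : f v ∈ frontier (convexHull ℝ (Set.range f)))
    (hx : f x ∉ frontier (convexHull ℝ (Set.range f)))
    (hy : f y ∉ frontier (convexHull ℝ (Set.range f))) :
    Disjoint (segment ℝ (f u) (f x)) (segment ℝ (f y) (f v)) ∧
    (segment ℝ (f u) (f y) ∩ segment ℝ (f x) (f v)).Nonempty :=
  insideObstacleRep_induced_path_convex_quadrilateral_general G f C hrep u x y v hdistinct he₁ he₂
    he₃ hn₁ hn₂ hn₃ hu hv hx hy

end
end
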